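/- Let h>0, a∈ℝ, ν∈(0,1], let y:(hℕ)_a→ℝ satisfy y(t)≥0 for all t∈(hℕ)_a, and let l be an odd integer with l≥3. Then (_aΔ_h^ν y^l)(t) ≤ l·y(t+νh)^{l−1}·(_aΔ_h^ν y)(t) for all t∈(hℕ)_{a+(1−ν)h}, where y^l denotes the function t↦y(t)^l. -/
import Mathlib


open Finset Filter Matrix

/-- The `h`-factorial function `t_h^(ν) = h^ν Γ(t/h+1)/Γ(t/h+1-ν)`. -/
noncomputable def hfact (h t ν : ℝ) : ℝ :=
  h ^ ν * Real.Gamma (t / h + 1) / Real.Gamma (t / h + 1 - ν)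

/-- The forward `h`-difference operator. -/
noncomputable def fdiff (h : ℝ) (y : ℝ → ℝ) (t : ℝ) : ℝ := (y (t + h) - y t) / h

/-- The fractional `h`-sum of order `μ > 0` of `y : (hℕ)_a → ℝ`, evaluated at the
grid point `t = a + μh + k·h` of `(hℕ)_{a+μh}`. -/
noncomputable def hSum (h a μ : ℝ) (y : ℝ → ℝ) (k : ℕ) : ℝ :=
  (h / Real.Gamma μ) *
    ∑ j ∈ Finset.range (k + 1),
      hfact h (a + μ * h + (k : ℝ) * h - (a + (j : ℝ) * h + h)) (μ - 1) * y (a + (j : ℝ) * h)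

/-- The Riemann–Liouville-like `h`-difference of order `ν ∈ (0,1]` of `y : (hℕ)_a → ℝ`,
evaluated at the grid point `t = a + (1-ν)h + k·h` of `(hℕ)_{a+(1-ν)h}`:
for `ν ∈ (0,1)` it is `Δ_h` applied to the `(1-ν)`-fractional `h`-sum. -/
noncomputable def rlD (h a ν : ℝ) (y : ℝ → ℝ) (k : ℕ) : ℝ :=
  if ν = 1 then fdiff h y (a + (k : ℝ) * h)
  else (hSum h a (1 - ν) y (k + 1) - hSum h a (1 - ν) y k) / h

/-- Convexity of `x ^ l` on the nonnegative reals: tangent line bound. -/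
lemma convex_pow_tangent (l : ℕ) (hl : 1 ≤ l) (x b : ℝ) (hx : 0 ≤ x) (hb : 0 ≤ b) :
    b ^ l + (l : ℝ) * b ^ (l - 1) * (x - b) ≤ x ^ l := by
  have hfac : (∑ i ∈ Finset.range l, x ^ i * b ^ (l - 1 - i)) * (x - b) = x ^ l - b ^ l :=
    geom_sum₂_mul x b l
  have hbb : ∀ i ∈ Finset.range l, b ^ i * b ^ (l - 1 - i) = b ^ (l - 1) := by
    intro i hi
    rw [← pow_add]
    congr 1
    have := Finset.mem_range.mp hi
    omega
  rcases le_total b x with hc | hc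
  · have hsge : (l : ℝ) * b ^ (l - 1) ≤ ∑ i ∈ Finset.range l, x ^ i * b ^ (l - 1 - i) := by
      calc (l : ℝ) * b ^ (l - 1) = ∑ _i ∈ Finset.range l, b ^ (l - 1) := by
            rw [Finset.sum_const, Finset.card_range, nsmul_eq_mul]
        _ ≤ _ := by
            apply Finset.sum_le_sum
            intro i hi
            rw [← hbb i hi]
            exact mul_le_mul_of_nonneg_right (pow_le_pow_left₀ hb hc i) (pow_nonneg hb _)
    have := mul_le_mul_of_nonneg_right hsge (sub_nonneg.mpr hc)
    linarith [hfac, this]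
  · have hsle : (∑ i ∈ Finset.range l, x ^ i * b ^ (l - 1 - i)) ≤ (l : ℝ) * b ^ (l - 1) := by
      calc (∑ i ∈ Finset.range l, x ^ i * b ^ (l - 1 - i))
          ≤ ∑ _i ∈ Finset.range l, b ^ (l - 1) := by
            apply Finset.sum_le_sum
            intro i hi
            rw [← hbb i hi]
            exact mul_le_mul_of_nonneg_right (pow_le_pow_left₀ hx hc i) (pow_nonneg hb _)
        _ = (l : ℝ) * b ^ (l - 1) := by
            rw [Finset.sum_const, Finset.card_range, nsmul_eq_mul]
    have := mul_le_mul_of_nonpos_right hsle (sub_nonpos.mpr hc)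
    linarith [hfac, this]

/-- The binomial-type coefficient `Γ(μ+m)/Γ(m+1)`. -/
noncomputable def Bc (μ : ℝ) (m : ℕ) : ℝ := Real.Gamma (μ + m) / Real.Gamma (m + 1)

lemma Bc_nonneg (μ : ℝ) (hμ : 0 < μ) (m : ℕ) : 0 ≤ Bc μ m := by
  unfold Bc
  have h1 : 0 < Real.Gamma (μ + m) := Real.Gamma_pos_of_pos (by positivity)
  have h2 : 0 < Real.Gamma ((m : ℝ) + 1) := Real.Gamma_pos_of_pos (by positivity)
  positivity

lemma Bc_zero (μ : ℝ) : Bc μ 0 = Real.Gamma μ := by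
  simp [Bc, Real.Gamma_one]

lemma Bc_succ_le (μ : ℝ) (hμ0 : 0 < μ) (hμ1 : μ ≤ 1) (m : ℕ) : Bc μ (m + 1) ≤ Bc μ m := by
  unfold Bc
  have e1 : μ + ((m + 1 : ℕ) : ℝ) = (μ + m) + 1 := by push_cast; ring
  have e2 : ((m + 1 : ℕ) : ℝ) + 1 = ((m : ℝ) + 1) + 1 := by push_cast; ring
  rw [e1, e2, Real.Gamma_add_one (by positivity), Real.Gamma_add_one (by positivity)]
  have hg1 : 0 < Real.Gamma (μ + m) := Real.Gamma_pos_of_pos (by positivity)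
  have hg2 : 0 < Real.Gamma ((m : ℝ) + 1) := Real.Gamma_pos_of_pos (by positivity)
  rw [div_le_div_iff₀ (by positivity) hg2]
  have hμm : μ + m ≤ (m : ℝ) + 1 := by linarith
  nlinarith [mul_pos hg1 hg2]

lemma rpow_split (h μ : ℝ) (hh : 0 < h) : h ^ μ = h ^ (μ - 1) * h := by
  rw [Real.rpow_sub hh, Real.rpow_one, div_mul_cancel₀ _ (ne_of_gt hh)]

lemma hfact_eval (h μ : ℝ) (hh : 0 < h) (m : ℕ) :
    hfact h ((μ + m - 1) * h) (μ - 1) = h ^ (μ - 1) * Bc μ m := by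
  unfold hfact Bc
  rw [mul_div_cancel_right₀ _ (ne_of_gt hh)]
  have e1 : μ + (m : ℝ) - 1 + 1 = μ + m := by ring
  have e2 : μ + (m : ℝ) - 1 + 1 - (μ - 1) = (m : ℝ) + 1 := by ring
  rw [e2, e1, mul_div_assoc]

lemma hSum_eq (h a μ : ℝ) (hh : 0 < h) (y : ℝ → ℝ) (K : ℕ) :
    hSum h a μ y K
      = (h ^ μ / Real.Gamma μ) *
          ∑ j ∈ Finset.range (K + 1), Bc μ (K - j) * y (a + (j : ℝ) * h) := by
  unfold hSum
  rw [Finset.mul_sum, Finset.mul_sum]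
  apply Finset.sum_congr rfl
  intro j hj
  have hjK : j ≤ K := Nat.lt_succ_iff.mp (Finset.mem_range.mp hj)
  have harg : a + μ * h + (K : ℝ) * h - (a + (j : ℝ) * h + h)
      = (μ + ((K - j : ℕ) : ℝ) - 1) * h := by
    rw [Nat.cast_sub hjK]; ring
  rw [harg, hfact_eval h μ hh (K - j)]
  rw [rpow_split h μ hh]
  ring

lemma rlD_repr (h a ν : ℝ) (hh : 0 < h) (hν : ν ≠ 1) (hμ0 : 0 < 1 - ν) (y : ℝ → ℝ) (k : ℕ) :
    rlD h a ν y k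
      = (h ^ ((1 - ν) - 1) / Real.Gamma (1 - ν)) *
          (Real.Gamma (1 - ν) * y (a + ((k : ℝ) + 1) * h)
            + ∑ j ∈ Finset.range (k + 1),
                (Bc (1 - ν) ((k - j) + 1) - Bc (1 - ν) (k - j)) * y (a + (j : ℝ) * h)) := by
  set μ := 1 - ν with hμdef
  rw [rlD, if_neg hν, hSum_eq h a μ hh y (k + 1), hSum_eq h a μ hh y k]
  have step : ∑ j ∈ Finset.range (k + 1 + 1), Bc μ ((k + 1) - j) * y (a + (j : ℝ) * h)
      = (∑ j ∈ Finset.range (k + 1), Bc μ ((k - j) + 1) * y (a + (j : ℝ) * h))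
        + Real.Gamma μ * y (a + ((k : ℝ) + 1) * h) := by
    rw [Finset.sum_range_succ]
    congr 1
    · apply Finset.sum_congr rfl
      intro j hj
      have hjK : j ≤ k := Nat.lt_succ_iff.mp (Finset.mem_range.mp hj)
      have : k + 1 - j = (k - j) + 1 := by omega
      rw [this]
    · rw [Nat.sub_self, Bc_zero]
      push_cast
      ring_nf
  rw [step]
  have hdiff : ∑ j ∈ Finset.range (k + 1),
      (Bc μ ((k - j) + 1) - Bc μ (k - j)) * y (a + (j : ℝ) * h)
      = (∑ j ∈ Finset.range (k + 1), Bc μ ((k - j) + 1) * y (a + (j : ℝ) * h))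
        - ∑ j ∈ Finset.range (k + 1), Bc μ (k - j) * y (a + (j : ℝ) * h) := by
    rw [← Finset.sum_sub_distrib]
    apply Finset.sum_congr rfl
    intro j _
    ring
  rw [hdiff]
  rw [rpow_split h μ hh]
  have hGam : Real.Gamma μ ≠ 0 := ne_of_gt (Real.Gamma_pos_of_pos hμ0)
  field_simp
  ring

theorem stmt16 (h a ν : ℝ) (hh : 0 < h) (hν0 : 0 < ν) (hν1 : ν ≤ 1)
    (y : ℝ → ℝ) (hy : ∀ k : ℕ, 0 ≤ y (a + (k : ℝ) * h))
    (l : ℕ) (hl : Odd l) (hl3 : 3 ≤ l) :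
    ∀ k : ℕ, rlD h a ν (fun t => y t ^ l) k
      ≤ (l : ℝ) * y (a + ((k : ℝ) + 1) * h) ^ (l - 1) * rlD h a ν y k := by
  intro k
  have hl1 : 1 ≤ l := by omega
  have hbnn : 0 ≤ y (a + ((k : ℝ) + 1) * h) := by
    have := hy (k + 1)
    push_cast at this
    exact this
  have hxnn : ∀ j : ℕ, 0 ≤ y (a + (j : ℝ) * h) := hy
  by_cases hcase : ν = 1
  · subst hcase
    simp only [rlD, if_pos rfl, fdiff, eq_self_iff_true, if_true]
    have e : a + (k : ℝ) * h + h = a + ((k : ℝ) + 1) * h := by ring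
    rw [e]
    set b := y (a + ((k : ℝ) + 1) * h) with hbdef
    set x := y (a + (k : ℝ) * h) with hxdef
    have key := convex_pow_tangent l hl1 x b (hxnn k) hbnn
    rw [show (l : ℝ) * b ^ (l - 1) * ((b - x) / h) = ((l : ℝ) * b ^ (l - 1) * (b - x)) / h by ring]
    exact (div_le_div_iff_of_pos_right hh).mpr (by linarith [key])
  · have hνlt : ν < 1 := lt_of_le_of_ne hν1 hcase
    have hμ0 : 0 < 1 - ν := by linarith
    have hμ1 : 1 - ν ≤ 1 := by linarith
    set μ := 1 - ν with hμdef
    rw [rlD_repr h a ν hh hcase hμ0 (fun t => y t ^ l) k,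
        rlD_repr h a ν hh hcase hμ0 y k]
    set b := y (a + ((k : ℝ) + 1) * h) with hbdef
    set C := h ^ (μ - 1) / Real.Gamma μ with hCdef
    have hΓ : 0 < Real.Gamma μ := Real.Gamma_pos_of_pos hμ0
    have hC : 0 < C := div_pos (Real.rpow_pos_of_pos hh _) hΓ
    rw [show (l : ℝ) * b ^ (l - 1) *
        (C * (Real.Gamma μ * b + ∑ j ∈ Finset.range (k + 1),
          (Bc μ ((k - j) + 1) - Bc μ (k - j)) * y (a + (j : ℝ) * h)))
        = C * ((l : ℝ) * b ^ (l - 1) *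
          (Real.Gamma μ * b + ∑ j ∈ Finset.range (k + 1),
            (Bc μ ((k - j) + 1) - Bc μ (k - j)) * y (a + (j : ℝ) * h))) by ring]
    apply mul_le_mul_of_nonneg_left _ hC.le
    have hD : ∀ m : ℕ, Bc μ (m + 1) - Bc μ m ≤ 0 :=
      fun m => sub_nonpos.mpr (Bc_succ_le μ hμ0 hμ1 m)
    have hterm : ∀ j ∈ Finset.range (k + 1),
        (Bc μ ((k - j) + 1) - Bc μ (k - j)) * y (a + (j : ℝ) * h) ^ l
          ≤ (Bc μ ((k - j) + 1) - Bc μ (k - j)) *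
              (b ^ l + (l : ℝ) * b ^ (l - 1) * (y (a + (j : ℝ) * h) - b)) := by
      intro j _
      exact mul_le_mul_of_nonpos_left
        (convex_pow_tangent l hl1 _ b (hxnn j) hbnn) (hD (k - j))
    have hsum := Finset.sum_le_sum hterm
    have expand : ∑ j ∈ Finset.range (k + 1),
        (Bc μ ((k - j) + 1) - Bc μ (k - j)) *
          (b ^ l + (l : ℝ) * b ^ (l - 1) * (y (a + (j : ℝ) * h) - b))
        = (∑ j ∈ Finset.range (k + 1), (Bc μ ((k - j) + 1) - Bc μ (k - j)))
            * (b ^ l - (l : ℝ) * b ^ (l - 1) * b)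
          + (l : ℝ) * b ^ (l - 1) *
            ∑ j ∈ Finset.range (k + 1),
              (Bc μ ((k - j) + 1) - Bc μ (k - j)) * y (a + (j : ℝ) * h) := by
      rw [Finset.sum_mul, Finset.mul_sum, ← Finset.sum_add_distrib]
      apply Finset.sum_congr rfl
      intro j _
      ring
    have htel : ∑ j ∈ Finset.range (k + 1), (Bc μ ((k - j) + 1) - Bc μ (k - j))
        = Bc μ (k + 1) - Real.Gamma μ := by
      have hrefl := Finset.sum_range_reflect (fun m => Bc μ (m + 1) - Bc μ m) (k + 1)
      have e1 : ∑ j ∈ Finset.range (k + 1),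
          (Bc μ ((k + 1 - 1 - j) + 1) - Bc μ (k + 1 - 1 - j))
          = ∑ j ∈ Finset.range (k + 1), (Bc μ ((k - j) + 1) - Bc μ (k - j)) := by
        apply Finset.sum_congr rfl
        intro j hj
        have : k + 1 - 1 - j = k - j := by omega
        rw [this]
      rw [e1] at hrefl
      rw [hrefl, Finset.sum_range_sub (fun m => Bc μ m), Bc_zero]
    rw [expand, htel] at hsum
    have hbl : b ^ (l - 1) * b = b ^ l := by
      rw [← pow_succ]
      congr 1
      omega
    have hBk : 0 ≤ Bc μ (k + 1) := Bc_nonneg μ hμ0 (k + 1)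
    have hlR : (3 : ℝ) ≤ (l : ℝ) := by exact_mod_cast hl3
    have hblnn : 0 ≤ b ^ l := pow_nonneg hbnn l
    have hc1 : b ^ l - (l : ℝ) * b ^ (l - 1) * b = (1 - (l : ℝ)) * b ^ l := by
      rw [mul_assoc, hbl]; ring
    rw [hc1] at hsum
    have hRHS : (l : ℝ) * b ^ (l - 1) *
        (Real.Gamma μ * b + ∑ j ∈ Finset.range (k + 1),
          (Bc μ ((k - j) + 1) - Bc μ (k - j)) * y (a + (j : ℝ) * h))
        = (l : ℝ) * Real.Gamma μ * b ^ l
          + (l : ℝ) * b ^ (l - 1) * ∑ j ∈ Finset.range (k + 1),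
              (Bc μ ((k - j) + 1) - Bc μ (k - j)) * y (a + (j : ℝ) * h) := by
      rw [← hbl]; ring
    rw [hRHS]
    have hint : 0 ≤ ((l : ℝ) - 1) * (Bc μ (k + 1) * b ^ l) :=
      mul_nonneg (by linarith) (mul_nonneg hBk hblnn)
    nlinarith [hsum, hint, hΓ]
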